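/- Key eigenvalue-sum lemma: if a symmetric bilinear form Q on a finite-dimensional inner product space has λ_1+λ_2+λ_3+λ_4+αλ_5 ≥ 0 (with 0 ≤ α ≤ 1 and λ_1 ≤ … ≤ λ_N its eigenvalues), then for any five mutually orthogonal unit vectors v_1,…,v_5 one has Q(v_1,v_1)+Q(v_2,v_2)+Q(v_3,v_3)+Q(v_4,v_4)+αQ(v_5,v_5) ≥ 0. -/

import Mathlib

open scoped BigOperators

/-- The symmetric product `u ⊙ v = u ⊗ v + v ⊗ u`, as a matrix in standard coordinates. -/
def sym2 {n : ℕ} (u v : Fin n → ℝ) : Matrix (Fin n) (Fin n) ℝ :=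
  Matrix.of fun i j => u i * v j + v i * u j

/-- The inner product `⟨A, B⟩ = tr(Aᵀ B)` on two-tensors. -/
def minner {n : ℕ} (A B : Matrix (Fin n) (Fin n) ℝ) : ℝ :=
  ∑ i, ∑ j, A i j * B i j

/-- The curvature operator of the second kind as a bilinear form on symmetric two-tensors:
`R̊(h₁,h₂) = Σ R_{iklj} (h₁)_{ij} (h₂)_{kl}`. -/
def Rsec {n : ℕ} (R : Fin n → Fin n → Fin n → Fin n → ℝ)
    (h₁ h₂ : Matrix (Fin n) (Fin n) ℝ) : ℝ :=
  ∑ i, ∑ j, ∑ k, ∑ l, R i k l j * h₁ i j * h₂ k l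

/-- Multilinear evaluation of the curvature tensor on vectors. -/
def Rap {n : ℕ} (R : Fin n → Fin n → Fin n → Fin n → ℝ) (u v w x : Fin n → ℝ) : ℝ :=
  ∑ i, ∑ j, ∑ k, ∑ l, R i j k l * u i * v j * w k * x l

/-- An algebraic curvature tensor: antisymmetric in each pair, symmetric in pairs,
first Bianchi identity. -/
def IsAlgCurv {n : ℕ} (R : Fin n → Fin n → Fin n → Fin n → ℝ) : Prop :=
  (∀ i j k l, R i j k l = - R j i k l) ∧ (∀ i j k l, R i j k l = - R i j l k) ∧
  (∀ i j k l, R i j k l = R k l i j) ∧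
  (∀ i j k l, R i j k l + R i k l j + R i l j k = 0)

/-- An orthonormal family of vectors in Euclidean space. -/
def OrthonormalFam {n m : ℕ} (v : Fin m → Fin n → ℝ) : Prop :=
  ∀ a b, (∑ k, v a k * v b k) = if a = b then (1 : ℝ) else 0

/-!
Expand the test vectors `v a` in the orthonormal eigenbasis `u b`. With `c a b = ⟪v a, u b⟫` and
weights `w = (1, 1, 1, 1, α)`, the weighted sum of `Q (v a)` equals `∑ b, μ b * t b` where
`t b = ∑ a, w a * c a b ^ 2`. Parseval's identity gives `∑ b, t b = 4 + α`, Bessel's inequality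
gives `0 ≤ t b ≤ 1`, and for such weights `∑ b, μ b * t b` is minimal when `t` is the indicator of
the four smallest eigenvalues plus `α` on the fifth: `(μ b - μ 4) * (t b - s b) ≥ 0` termwise for
this minimiser `s`.
-/

open Finset

/-- The bathtub principle. -/
theorem Finset.sum_add_mul_le_sum_mul_of_threshold {ι : Type*} [Fintype ι] (S : Finset ι)
    {μ t : ι → ℝ} {m α : ℝ} (hS : ∀ i ∈ S, μ i ≤ m) (hSc : ∀ i ∉ S, m ≤ μ i)
    (ht0 : ∀ i, 0 ≤ t i) (ht1 : ∀ i, t i ≤ 1) (hsum : ∑ i, t i = #S + α) :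
    ∑ i ∈ S, μ i + α * m ≤ ∑ i, μ i * t i := by
  have key : ∑ i ∈ S, (μ i - m) ≤ ∑ i, (μ i - m) * t i :=
    calc ∑ i ∈ S, (μ i - m)
        ≤ ∑ i ∈ S, (μ i - m) * t i :=
          sum_le_sum fun i hi => by nlinarith [hS i hi, ht1 i]
      _ ≤ ∑ i, (μ i - m) * t i :=
          sum_le_sum_of_subset_of_nonneg (subset_univ S) fun i _ hi =>
            mul_nonneg (sub_nonneg.2 (hSc i hi)) (ht0 i)
  simp only [sum_sub_distrib, sub_mul, ← mul_sum, sum_const, nsmul_eq_mul, hsum] at key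
  linarith

theorem Monotone.sum_castLE_add_mul_le_sum_mul {N k : ℕ} (hk : k < N) {μ : Fin N → ℝ}
    (hμ : Monotone μ) {t : Fin N → ℝ} {α : ℝ} (ht0 : ∀ i, 0 ≤ t i) (ht1 : ∀ i, t i ≤ 1)
    (hsum : ∑ i, t i = k + α) :
    ∑ i : Fin k, μ (Fin.castLE hk.le i) + α * μ ⟨k, hk⟩ ≤ ∑ i, μ i * t i := by
  have hmem : ∀ i : Fin N, i ∈ univ.map (Fin.castLEEmb hk.le) ↔ (i : ℕ) < k := fun i =>
    ⟨fun h => by obtain ⟨j, -, rfl⟩ := mem_map.1 h; exact j.2,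
     fun h => mem_map.2 ⟨⟨i, h⟩, mem_univ _, rfl⟩⟩
  have := (univ.map (Fin.castLEEmb hk.le)).sum_add_mul_le_sum_mul_of_threshold
    (μ := μ) (m := μ ⟨k, hk⟩)
    (fun i hi => hμ (Fin.mk_le_mk.2 ((hmem i).1 hi).le))
    (fun i hi => hμ (Fin.mk_le_mk.2 (not_lt.1 (mt (hmem i).2 hi))))
    ht0 ht1 (by simpa using hsum)
  simpa using this

section

variable {E : Type*} [NormedAddCommGroup E] [InnerProductSpace ℝ E]

open scoped RealInnerProductSpace

theorem OrthonormalBasis.inner_map_self_eq_sum {ι : Type*} [Fintype ι]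
    (b : OrthonormalBasis ι ℝ E) {T : E →ₗ[ℝ] E} {μ : ι → ℝ} (hT : ∀ i, T (b i) = μ i • b i)
    (x : E) : ⟪x, T x⟫ = ∑ i, μ i * ⟪b i, x⟫ ^ 2 := by
  have hTx : T x = ∑ i, (⟪b i, x⟫ * μ i) • b i := by
    conv_lhs => rw [← b.sum_repr' x]
    simp [hT, smul_smul]
  rw [hTx, inner_sum]
  refine sum_congr rfl fun i _ => ?_
  rw [inner_smul_right, real_inner_comm]
  ring

theorem OrthonormalBasis.sum_castLE_add_mul_le_sum_mul_inner {N k : ℕ} (hk : k < N)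
    (b : OrthonormalBasis (Fin N) ℝ E) {T : E →ₗ[ℝ] E} {μ : Fin N → ℝ} (hμ : Monotone μ)
    (hT : ∀ i, T (b i) = μ i • b i) {ι : Type*} [Fintype ι] {v : ι → E} (hv : Orthonormal ℝ v)
    {w : ι → ℝ} (hw0 : ∀ a, 0 ≤ w a) (hw1 : ∀ a, w a ≤ 1) {α : ℝ} (hw : ∑ a, w a = k + α) :
    ∑ i : Fin k, μ (Fin.castLE hk.le i) + α * μ ⟨k, hk⟩ ≤ ∑ a, w a * ⟪v a, T (v a)⟫ := by
  set t : Fin N → ℝ := fun i => ∑ a, w a * ⟪b i, v a⟫ ^ 2 with ht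
  have ht0 : ∀ i, 0 ≤ t i := fun i => sum_nonneg fun a _ => mul_nonneg (hw0 a) (sq_nonneg _)
  have ht1 : ∀ i, t i ≤ 1 := fun i =>
    calc t i ≤ ∑ a, ⟪v a, b i⟫ ^ 2 := sum_le_sum fun a _ => by
          rw [real_inner_comm]; nlinarith [hw1 a, sq_nonneg ⟪v a, b i⟫]
      _ ≤ ‖b i‖ ^ 2 := by simpa using hv.sum_inner_products_le (b i) (s := univ)
      _ = 1 := by simp
  have hsum : ∑ i, t i = k + α := by
    have parseval : ∀ a, ∑ i, ⟪b i, v a⟫ ^ 2 = 1 := fun a => by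
      simpa [hv.1 a] using b.sum_sq_norm_inner_right (v a)
    simp only [ht]
    rw [sum_comm]
    simp_rw [← mul_sum, parseval, mul_one, hw]
  have hQ : ∑ a, w a * ⟪v a, T (v a)⟫ = ∑ i, μ i * t i := by
    simp_rw [b.inner_map_self_eq_sum hT, ht, mul_sum]
    rw [sum_comm]
    exact sum_congr rfl fun i _ => sum_congr rfl fun a _ => by ring
  rw [hQ]
  exact hμ.sum_castLE_add_mul_le_sum_mul hk ht0 ht1 hsum

end

theorem orthonormal_toLp_iff_orthonormalFam {n m : ℕ} (v : Fin m → Fin n → ℝ) :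
    Orthonormal ℝ (fun a => WithLp.toLp 2 (v a)) ↔ OrthonormalFam v := by
  simp [orthonormal_iff_ite, EuclideanSpace.inner_toLp_toLp, OrthonormalFam, dotProduct, mul_comm]

theorem sum_sum_mul_mul_eq_inner {n : ℕ} (A : Matrix (Fin n) (Fin n) ℝ) (x : Fin n → ℝ) :
    ∑ i, ∑ j, x i * A i j * x j
      = inner ℝ (WithLp.toLp 2 x) (Matrix.toEuclideanLin A (WithLp.toLp 2 x)) := by
  simp only [Matrix.toLpLin_toLp, Matrix.toLin'_apply, EuclideanSpace.inner_toLp_toLp, dotProduct,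
    Matrix.mulVec, Pi.star_apply, star_trivial, sum_mul]
  exact sum_congr rfl fun i _ => sum_congr rfl fun j _ => by ring

theorem statement_7 (N : ℕ) (hN : 5 ≤ N)
    (A : Matrix (Fin N) (Fin N) ℝ)
    (u : Fin N → Fin N → ℝ) (hu : OrthonormalFam u)
    (μ : Fin N → ℝ) (hmono : Monotone μ)
    (heig : ∀ a, A.mulVec (u a) = μ a • u a)
    (α : ℝ) (hα0 : 0 ≤ α) (hα1 : α ≤ 1)
    (hsum : 0 ≤ μ ⟨0, by omega⟩ + μ ⟨1, by omega⟩ + μ ⟨2, by omega⟩ + μ ⟨3, by omega⟩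
      + α * μ ⟨4, by omega⟩) :
    ∀ v : Fin 5 → Fin N → ℝ, OrthonormalFam v →
      0 ≤ (∑ i, ∑ j, v 0 i * A i j * v 0 j) + (∑ i, ∑ j, v 1 i * A i j * v 1 j)
        + (∑ i, ∑ j, v 2 i * A i j * v 2 j) + (∑ i, ∑ j, v 3 i * A i j * v 3 j)
        + α * (∑ i, ∑ j, v 4 i * A i j * v 4 j) := by
  intro v hv
  have hu' := (orthonormal_toLp_iff_orthonormalFam u).2 hu
  let b : OrthonormalBasis (Fin N) ℝ (EuclideanSpace ℝ (Fin N)) :=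
    .mk hu' (hu'.linearIndependent.span_eq_top_of_card_eq_finrank' (by simp)).ge
  have hT : ∀ i, Matrix.toEuclideanLin A (b i) = μ i • b i := fun i => by
    simp [b, heig, WithLp.toLp_smul]
  have key := b.sum_castLE_add_mul_le_sum_mul_inner (by omega : 4 < N) hmono hT
    ((orthonormal_toLp_iff_orthonormalFam v).2 hv) (w := ![1, 1, 1, 1, α])
    (by simp [Fin.forall_fin_succ, hα0]) (by simp [Fin.forall_fin_succ, hα1])
    (by simp [Fin.sum_univ_five]; ring)
  simp only [Fin.sum_univ_four, Fin.sum_univ_five, ← sum_sum_mul_mul_eq_inner, Matrix.cons_val,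
    one_mul] at key
  exact hsum.trans key
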